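/- arXiv:1207.2997 — 5 statements merged into one kernel-verified Lean document; each statement's English description precedes it below -/
import Mathlib

section
/- If a topological vector space X has the Banach–Steinhaus property (every pointwise-bounded subset of the topological dual X* is equicontinuous), then every absorbing, convex, weakly-closed subset of X is a neighborhood of 0. -/
open Topology Set

noncomputable section

variable {X : Type*} [AddCommGroup X] [Module ℝ X] [TopologicalSpace X]

/-- pointwise-bounded subset of the dual -/
def PtwBounded (B : Set (X →L[ℝ] ℝ)) : Prop :=
  ∀ x : X, ∃ M : ℝ, ∀ f ∈ B, |f x| ≤ M

/-- equicontinuous: contained in the polar of a neighborhood of 0 -/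
def Equicont (B : Set (X →L[ℝ] ℝ)) : Prop :=
  ∃ V ∈ 𝓝 (0 : X), ∀ f ∈ B, ∀ x ∈ V, |f x| ≤ 1

variable (X) in
/-- Banach–Steinhaus property -/
def BSProp : Prop := ∀ B : Set (X →L[ℝ] ℝ), PtwBounded B → Equicont B

variable (X) in
/-- the weak topology on X -/
def weakTop : TopologicalSpace X :=
  TopologicalSpace.induced (fun x => fun f : X →L[ℝ] ℝ => f x) inferInstance

def WeaklyClosed (C : Set X) : Prop := @IsClosed X (weakTop X) C

def WeakLSC (f : X → EReal) : Prop := @LowerSemicontinuous X EReal (weakTop X) _ f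

/-- algebraic interior -/
def core (A : Set X) : Set X :=
  {a | ∀ x : X, ∃ μ > (0:ℝ), ∀ l : ℝ, 0 ≤ l → l ≤ μ → a + l • x ∈ A}

/-- Fitzpatrick function of a multifunction given by its graph -/
def fitz (T : Set (X × (X →L[ℝ] ℝ))) (z : X × (X →L[ℝ] ℝ)) : EReal :=
  ⨆ p : T, ((z.2 p.1.1 + p.1.2 z.1 - p.1.2 p.1.1 : ℝ) : EReal)

def fitzDom (T : Set (X × (X →L[ℝ] ℝ))) : Set (X × (X →L[ℝ] ℝ)) :=
  {z | fitz T z < ⊤}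

/-- local boundedness of a multifunction at a point -/
def LocBddAt (T : Set (X × (X →L[ℝ] ℝ))) (x₀ : X) : Prop :=
  ∃ U ∈ 𝓝 x₀, Equicont {g | ∃ p ∈ T, p.1 ∈ U ∧ p.2 = g}

/-- ε-monotone operator -/
def EMonotone (ε : ℝ) (T : Set (X × (X →L[ℝ] ℝ))) : Prop :=
  ∀ p ∈ T, ∀ q ∈ T, -ε ≤ p.2 p.1 - p.2 q.1 - q.2 p.1 + q.2 q.1

/-- ε-maximal monotone operator -/
def MaxEMonotone (ε : ℝ) (T : Set (X × (X →L[ℝ] ℝ))) : Prop :=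
  T.Nonempty ∧ EMonotone ε T ∧ ∀ S, EMonotone ε S → T ⊆ S → S = T

/-- support function with values in EReal -/
def sigmaE (B : Set (X →L[ℝ] ℝ)) (x : X) : EReal := ⨆ f : B, ((f.1 x : ℝ) : EReal)

/-- real-valued support function -/
def sigmaR (B : Set (X →L[ℝ] ℝ)) (x : X) : ℝ := ⨆ f : B, f.1 x

/-- ε-subdifferential of a real-valued function -/
def esubdiff (ε : ℝ) (f : X → ℝ) (x : X) : Set (X →L[ℝ] ℝ) :=
  {g | ∀ x' : X, g (x' - x) + f x ≤ f x' + ε}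

/-- convexity for EReal-valued functions -/
def ConvexFnE (f : X → EReal) : Prop :=
  ∀ x y : X, ∀ a b : ℝ, 0 ≤ a → 0 ≤ b → a + b = 1 →
    f (a • x + b • y) ≤ (a : EReal) * f x + (b : EReal) * f y

/-- proper EReal-valued function -/
def ProperE (f : X → EReal) : Prop := (∃ x, f x < ⊤) ∧ ∀ x, f x ≠ ⊥

variable (X) in
/-- barreledness: every convex closed absorbing set is a neighborhood of 0 -/
def BarrelProp : Prop :=
  ∀ C : Set X, Convex ℝ C → IsClosed C → Absorbent ℝ C → C ∈ 𝓝 (0 : X)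

/-! The one-sided polar of an absorbing set `C` is pointwise bounded, so by the Banach–Steinhaus
property it is bounded by `1` on a neighbourhood `V` of `0`. A point of `V` outside `C` would be
separated from the weakly closed convex set `C` by a functional lying in that polar and exceeding
`1` at the point. -/

open Pointwise

def oneSidedPolar (C : Set X) : Set (X →L[ℝ] ℝ) := {g | ∀ c ∈ C, g c ≤ 1}

theorem apply_le_of_mem_oneSidedPolar {C : Set X} {g : X →L[ℝ] ℝ} (hg : g ∈ oneSidedPolar C)
    {r : ℝ} (hr : 0 ≤ r) {x : X} (hx : x ∈ r • C) : g x ≤ r := by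
  obtain ⟨c, hc, rfl⟩ := hx
  simpa using mul_le_mul_of_nonneg_left (hg c hc) hr

theorem Absorbent.ptwBounded_oneSidedPolar {C : Set X} (hC : Absorbent ℝ C) :
    PtwBounded (oneSidedPolar C) := by
  intro x
  obtain ⟨r, hr, hxr⟩ := hC.gauge_set_nonempty (x := x)
  obtain ⟨s, hs, hxs⟩ := hC.gauge_set_nonempty (x := -x)
  refine ⟨max r s, fun g hg => abs_le.2 ⟨?_, ?_⟩⟩
  · have hneg := apply_le_of_mem_oneSidedPolar hg hs.le hxs
    rw [map_neg] at hneg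
    linarith [le_max_right r s]
  · exact (apply_le_of_mem_oneSidedPolar hg hr.le hxr).trans (le_max_left r s)

theorem WeaklyClosed.exists_lt_of_notMem {C : Set X} (hConv : Convex ℝ C)
    (hClosed : WeaklyClosed C) {x : X} (hx : x ∉ C) :
    ∃ (f : X →L[ℝ] ℝ) (u : ℝ), (∀ c ∈ C, f c < u) ∧ u < f x := by
  -- `X` with the topology `weakTop X`, as a locally convex space
  let W := WeakBilin (topDualPairing ℝ X).flip
  have hConvW : Convex (E := W) ℝ C := hConv
  have hClosedW : IsClosed (X := W) C := hClosed
  obtain ⟨f, u, hfC, hfx⟩ := geometric_hahn_banach_closed_point hConvW hClosedW hx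
  have hweak : Continuous (X := X) (Y := W) id :=
    WeakBilin.continuous_of_continuous_eval _ fun g => g.continuous
  exact ⟨⟨f.toLinearMap, f.continuous.comp hweak⟩, u, hfC, hfx⟩

theorem WeaklyClosed.exists_mem_oneSidedPolar_one_lt {C : Set X} (hConv : Convex ℝ C)
    (hClosed : WeaklyClosed C) (hC₀ : (0 : X) ∈ C) {x : X} (hx : x ∉ C) :
    ∃ g ∈ oneSidedPolar C, 1 < g x := by
  obtain ⟨f, u, hfC, hfx⟩ := hClosed.exists_lt_of_notMem hConv hx
  have hu : 0 < u := by simpa using hfC 0 hC₀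
  refine ⟨u⁻¹ • f, fun c hc => ?_, ?_⟩
  · simpa [inv_mul_le_iff₀ hu] using (hfC c hc).le
  · simpa [lt_inv_mul_iff₀ hu] using hfx

theorem stmt0_general (hBS : BSProp X) :
    ∀ C : Set X, Absorbent ℝ C → Convex ℝ C → WeaklyClosed C → C ∈ 𝓝 (0 : X) := by
  intro C hAbs hConv hClosed
  obtain ⟨V, hV, hVC⟩ := hBS _ hAbs.ptwBounded_oneSidedPolar
  refine Filter.mem_of_superset hV fun x hxV => ?_
  by_contra hxC
  obtain ⟨g, hg, hgx⟩ := hClosed.exists_mem_oneSidedPolar_one_lt hConv hAbs.zero_mem hxC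
  exact (hgx.trans_le (le_abs_self _)).not_ge (hVC g hg x hxV)

theorem stmt0 [IsTopologicalAddGroup X] [ContinuousSMul ℝ X] (hBS : BSProp X) :
    ∀ C : Set X, Absorbent ℝ C → Convex ℝ C → WeaklyClosed C → C ∈ 𝓝 (0 : X) :=
  stmt0_general hBS
end
end

section
/- Let X be a topological vector space in which every absorbing, convex, weakly-closed subset is a neighborhood of 0. Then every proper convex weakly lower semicontinuous function f : X → ℝ ∪ {∞} is continuous on the topological interior of its domain, and moreover the topological interior of dom f equals the algebraic interior (core) of dom f. -/
/-!
For `a ∈ core (dom f)` with `f a = r`, the set `D = {y | f (a + y) ≤ r + 1}` is convex (convexity of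
`f`), weakly closed (weak lower semicontinuity) and contains a segment `[0, t] • x` in every
direction `x` (convexity on the segment from `a` to a point `a + μ • x` of the domain). Hence
`D ∩ -D` is absorbent, convex and weakly closed, so by hypothesis it is a neighbourhood of `0`:
`f` is bounded above near every point of the core. This gives `core ⊆ interior`, and a convex
function bounded above near a point where it is finite is continuous there, by comparing `f` on
`a + t • y` with its values at `a`, `a + y` and `a - y`.
-/

open Topology Set

noncomputable section

variable {X : Type*} [AddCommGroup X] [Module ℝ X] [TopologicalSpace X]

open Filter

lemma EReal.exists_eq_coe_of_ne_bot_of_le_coe {z : EReal} (hz : z ≠ ⊥) {c : ℝ} (hzc : z ≤ c) :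
    ∃ p : ℝ, z = p ∧ p ≤ c := by
  have hz' : z ≠ ⊤ := (hzc.trans_lt (EReal.coe_lt_top c)).ne
  refine ⟨z.toReal, (EReal.coe_toReal hz' hz).symm, ?_⟩
  exact_mod_cast (EReal.coe_toReal hz' hz).symm ▸ hzc

lemma EReal.tendsto_nhds_coe_of_forall_eventually {α : Type*} {l : Filter α} {g : α → EReal}
    {r : ℝ} (h : ∀ ε > 0, ∀ᶠ x in l, ((r - ε : ℝ) : EReal) ≤ g x ∧ g x ≤ ((r + ε : ℝ) : EReal)) :
    Tendsto g l (𝓝 r) := by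
  refine tendsto_order.2 ⟨fun b hb => ?_, fun b hb => ?_⟩
  · obtain ⟨q, hbq, hqr⟩ := EReal.lt_iff_exists_real_btwn.1 hb
    have hε : 0 < r - q := by linarith [EReal.coe_lt_coe_iff.1 hqr]
    filter_upwards [h _ hε] with x hx
    exact hbq.trans_le (by simpa using hx.1)
  · obtain ⟨q, hrq, hqb⟩ := EReal.lt_iff_exists_real_btwn.1 hb
    have hε : 0 < q - r := by linarith [EReal.coe_lt_coe_iff.1 hrq]
    filter_upwards [h _ hε] with x hx
    exact (by simpa using hx.2 : g x ≤ q).trans_lt hqb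

lemma exists_pos_le_one_mul_lt (δ : ℝ) {ε : ℝ} (hε : 0 < ε) : ∃ t, 0 < t ∧ t ≤ 1 ∧ t * δ < ε := by
  obtain ⟨c, hc, hcδ⟩ := exists_pos_mul_lt hε δ
  refine ⟨min c 1, lt_min hc one_pos, min_le_right c 1, ?_⟩
  rcases le_or_gt 0 δ with hδ | hδ
  · nlinarith [min_le_left c 1]
  · nlinarith [lt_min hc one_pos]

section Core

variable {E : Type*} [AddCommGroup E] [Module ℝ E]

lemma core_subset (A : Set E) : core A ⊆ A := fun a ha => by
  obtain ⟨μ, hμ, hseg⟩ := ha 0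
  simpa using hseg 0 le_rfl hμ.le

lemma interior_subset_core [TopologicalSpace E] [ContinuousAdd E] [ContinuousSMul ℝ E]
    (A : Set E) : interior A ⊆ core A := by
  intro a ha x
  have hline : Tendsto (fun l : ℝ => a + l • x) (𝓝 0) (𝓝 a) :=
    (by fun_prop : Continuous fun l : ℝ => a + l • x).tendsto' 0 a (by simp)
  obtain ⟨ε, hε, hball⟩ :=
    Metric.eventually_nhds_iff.1 (hline.eventually (isOpen_interior.mem_nhds ha))
  refine ⟨ε / 2, by positivity, fun l hl₀ hlε => interior_subset (hball ?_)⟩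
  rw [Real.dist_eq, sub_zero, abs_of_nonneg hl₀]
  linarith

lemma zero_mem_core_of_convex {C : Set E} (hC : Convex ℝ C) (h₀ : (0 : E) ∈ C)
    (hray : ∀ x : E, ∃ t : ℝ, 0 < t ∧ t • x ∈ C) : (0 : E) ∈ core C := by
  intro x
  obtain ⟨t, ht, htx⟩ := hray x
  refine ⟨t, ht, fun l hl₀ hlt => ?_⟩
  rw [zero_add, show l • x = (l / t) • t • x by rw [smul_smul, div_mul_cancel₀ _ ht.ne']]
  exact hC.smul_mem_of_zero_mem h₀ htx ⟨div_nonneg hl₀ ht.le, div_le_one_of_le₀ hlt ht.le⟩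

lemma absorbent_inter_neg_of_zero_mem_core {C : Set E} (hC : (0 : E) ∈ core C) :
    Absorbent ℝ (C ∩ -C) := by
  refine absorbent_iff_eventually_nhdsNE_zero.2 fun x => ?_
  obtain ⟨μ₁, hμ₁, hx⟩ := hC x
  obtain ⟨μ₂, hμ₂, hnx⟩ := hC (-x)
  simp only [zero_add] at hx hnx
  have hμ : 0 < min μ₁ μ₂ := lt_min hμ₁ hμ₂
  filter_upwards [nhdsWithin_le_nhds (Ioo_mem_nhds (neg_lt_zero.2 hμ) hμ)] with c ⟨hc₁, hc₂⟩
  have h₁ := min_le_left μ₁ μ₂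
  have h₂ := min_le_right μ₁ μ₂
  rcases le_or_gt 0 c with hc | hc
  · exact ⟨hx c hc (by linarith), by simpa using hnx c hc (by linarith)⟩
  · refine ⟨by simpa using hnx (-c) (by linarith) (by linarith), ?_⟩
    simpa using hx (-c) (by linarith) (by linarith)

end Core

namespace ConvexFnE

variable {E : Type*} [AddCommGroup E] [Module ℝ E] {f : E → EReal}

lemma apply_add_smul_le (hconv : ConvexFnE f) (hbot : ∀ x, f x ≠ ⊥) {a v : E} {r M : ℝ}
    (ha : f a ≤ r) (hv : f (a + v) ≤ M) {s : ℝ} (hs₀ : 0 ≤ s) (hs₁ : s ≤ 1) :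
    f (a + s • v) ≤ ((r + s * (M - r) : ℝ) : EReal) := by
  obtain ⟨p, hp, hpr⟩ := EReal.exists_eq_coe_of_ne_bot_of_le_coe (hbot a) ha
  obtain ⟨q, hq, hqM⟩ := EReal.exists_eq_coe_of_ne_bot_of_le_coe (hbot _) hv
  have hcomb : (1 - s) • a + s • (a + v) = a + s • v := by module
  calc f (a + s • v) ≤ ((1 - s : ℝ) : EReal) * f a + (s : EReal) * f (a + v) :=
        hcomb ▸ hconv _ _ _ _ (by linarith) hs₀ (by ring)
    _ = (((1 - s) * p + s * q : ℝ) : EReal) := by rw [hp, hq]; norm_cast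
    _ ≤ _ := by exact_mod_cast (by nlinarith)

lemma sub_mul_le_apply_add_smul (hconv : ConvexFnE f) (hbot : ∀ x, f x ≠ ⊥) {a y : E} {r M : ℝ}
    (ha : f a = r) (hy : f (a - y) ≤ M) {t : ℝ} (ht : 0 ≤ t) :
    ((r - t * (M - r) : ℝ) : EReal) ≤ f (a + t • y) := by
  induction h : f (a + t • y) using EReal.rec with
  | bot => exact absurd h (hbot _)
  | top => exact le_top
  | coe p =>
    -- `a` divides the segment from `a + t • y` to `a - y` in the ratio `t : 1`
    have hs : t / (1 + t) * (1 + t) = t := div_mul_cancel₀ _ (by linarith)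
    have hseg : a + t • y + (t / (1 + t)) • -((1 + t) • y) = a := by
      rw [smul_neg, smul_smul, hs]; abel
    have key := hconv.apply_add_smul_le hbot h.le (v := -((1 + t) • y)) (M := M) (s := t / (1 + t))
      (by convert hy using 2; module) (div_nonneg ht (by linarith))
      (div_le_one_of_le₀ (by linarith) (by linarith))
    rw [hseg, ha] at key
    have key' : r * (1 + t) ≤ p * (1 + t) + t * (M - p) := by
      have := mul_le_mul_of_nonneg_right (by exact_mod_cast key : r ≤ p + t / (1 + t) * (M - p))
        (by linarith : (0 : ℝ) ≤ 1 + t)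
      rwa [add_mul, mul_right_comm, hs] at this
    exact_mod_cast (by linarith : r - t * (M - r) ≤ p)

lemma convex_sublevel (hconv : ConvexFnE f) (hbot : ∀ x, f x ≠ ⊥) (c : ℝ) :
    Convex ℝ {x | f x ≤ c} := by
  intro x hx y hy a b ha hb hab
  obtain rfl : a = 1 - b := by linarith
  have hseg := hconv.apply_add_smul_le hbot hx (v := y - x) (by simpa using hy) hb (by linarith)
  rwa [sub_self, mul_zero, add_zero, show x + b • (y - x) = (1 - b) • x + b • y by module] at hseg

lemma exists_pos_smul_le_of_mem_core (hconv : ConvexFnE f) (hbot : ∀ x, f x ≠ ⊥) {a : E}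
    (ha : a ∈ core {x | f x < ⊤}) {r : ℝ} (hr : f a = r) (x : E) :
    ∃ t : ℝ, 0 < t ∧ f (a + t • x) ≤ ((r + 1 : ℝ) : EReal) := by
  obtain ⟨μ, hμ, hseg⟩ := ha x
  have hfin : f (a + μ • x) ≠ ⊤ := (hseg μ hμ.le le_rfl).ne
  set M := (f (a + μ • x)).toReal
  obtain ⟨t, ht₀, ht₁, htM⟩ := exists_pos_le_one_mul_lt (M - r) one_pos
  refine ⟨t * μ, by positivity, ?_⟩
  have hle := hconv.apply_add_smul_le hbot hr.le (EReal.coe_toReal hfin (hbot _)).ge ht₀.le ht₁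
  rw [smul_smul] at hle
  exact hle.trans (by exact_mod_cast (by linarith))

lemma continuousAt_of_eventually_le [TopologicalSpace E] [IsTopologicalAddGroup E]
    [ContinuousSMul ℝ E] (hconv : ConvexFnE f) (hbot : ∀ x, f x ≠ ⊥) {a : E} {r M : ℝ}
    (ha : f a = r) (hbdd : ∀ᶠ x in 𝓝 a, f x ≤ M) : ContinuousAt f a := by
  have h₀ : ∀ᶠ y in 𝓝 (0 : E), f (a + y) ≤ M ∧ f (a - y) ≤ M := by
    refine Eventually.and ?_ ?_ <;> refine Tendsto.eventually ?_ hbdd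
    · exact (continuous_const_add a).tendsto' 0 a (add_zero a)
    · exact (by fun_prop : Continuous fun y => a - y).tendsto' 0 a (sub_zero a)
  have hnear : ∀ t, 0 < t → t ≤ 1 → ∀ᶠ x in 𝓝 a,
      ((r - t * (M - r) : ℝ) : EReal) ≤ f x ∧ f x ≤ ((r + t * (M - r) : ℝ) : EReal) := by
    intro t ht₀ ht₁
    have hlim : Tendsto (fun x => t⁻¹ • (x - a)) (𝓝 a) (𝓝 0) :=
      (by fun_prop : Continuous fun x => t⁻¹ • (x - a)).tendsto' a 0 (by simp)
    filter_upwards [hlim.eventually h₀] with x ⟨hxp, hxm⟩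
    have hx : a + t • t⁻¹ • (x - a) = x := by rw [smul_inv_smul₀ ht₀.ne', add_sub_cancel]
    rw [← hx]
    exact ⟨hconv.sub_mul_le_apply_add_smul hbot ha hxm ht₀.le,
      hconv.apply_add_smul_le hbot ha.le hxp ht₀.le ht₁⟩
  rw [ContinuousAt, ha]
  refine EReal.tendsto_nhds_coe_of_forall_eventually fun ε hε => ?_
  obtain ⟨t, ht₀, ht₁, htε⟩ := exists_pos_le_one_mul_lt (M - r) hε
  filter_upwards [hnear t ht₀ ht₁] with x ⟨hlo, hhi⟩
  exact ⟨le_trans (by exact_mod_cast (by linarith)) hlo,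
    hhi.trans (by exact_mod_cast (by linarith))⟩

end ConvexFnE

-- `weakTop X` is definitionally the topology of `WeakSpace ℝ X`, a topological vector space.
lemma WeaklyClosed.inter {C D : Set X} (hC : WeaklyClosed C) (hD : WeaklyClosed D) :
    WeaklyClosed (C ∩ D) :=
  IsClosed.inter (X := WeakSpace ℝ X) hC hD

lemma WeaklyClosed.neg {C : Set X} (hC : WeaklyClosed C) : WeaklyClosed (-C) :=
  IsClosed.neg (G := WeakSpace ℝ X) hC

lemma WeakLSC.weaklyClosed_sublevel_add {f : X → EReal} (hf : WeakLSC f) (a : X) (c : EReal) :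
    WeaklyClosed {y | f (a + y) ≤ c} :=
  (LowerSemicontinuous.isClosed_preimage (α := WeakSpace ℝ X) hf c).preimage
    (continuous_const_add (M := WeakSpace ℝ X) a)

lemma ConvexFnE.eventually_le_of_mem_core [IsTopologicalAddGroup X]
    (h : ∀ C : Set X, Absorbent ℝ C → Convex ℝ C → WeaklyClosed C → C ∈ 𝓝 (0 : X))
    {f : X → EReal} (hconv : ConvexFnE f) (hbot : ∀ x, f x ≠ ⊥) (hlsc : WeakLSC f) {a : X}
    (ha : a ∈ core {x | f x < ⊤}) {r : ℝ} (hr : f a = r) :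
    ∀ᶠ x in 𝓝 a, f x ≤ ((r + 1 : ℝ) : EReal) := by
  set D := {y | f (a + y) ≤ ((r + 1 : ℝ) : EReal)}
  have hD : Convex ℝ D := (hconv.convex_sublevel hbot _).translate_preimage_right a
  have hD₀ : (0 : X) ∈ D := by
    show f (a + 0) ≤ _
    rw [add_zero, hr]
    exact_mod_cast (by linarith)
  have hcore : (0 : X) ∈ core D :=
    zero_mem_core_of_convex hD hD₀ (hconv.exists_pos_smul_le_of_mem_core hbot ha hr)
  have hDw : WeaklyClosed D := hlsc.weaklyClosed_sublevel_add a _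
  have hnhds : D ∈ 𝓝 (0 : X) := mem_of_superset
    (h _ (absorbent_inter_neg_of_zero_mem_core hcore) (hD.inter hD.neg) (hDw.inter hDw.neg))
    inter_subset_left
  have hlim : Tendsto (fun x => x - a) (𝓝 a) (𝓝 0) :=
    (continuous_sub_right a).tendsto' a 0 (sub_self a)
  filter_upwards [hlim.eventually hnhds] with x hx
  simpa [D] using hx

theorem stmt1 [IsTopologicalAddGroup X] [ContinuousSMul ℝ X]
    (h : ∀ C : Set X, Absorbent ℝ C → Convex ℝ C → WeaklyClosed C → C ∈ 𝓝 (0 : X))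
    (f : X → EReal) (hf : ProperE f) (hconv : ConvexFnE f) (hlsc : WeakLSC f) :
    ContinuousOn f (interior {x | f x < ⊤}) ∧
      interior {x | f x < ⊤} = core {x | f x < ⊤} := by
  set A := {x | f x < ⊤}
  have hbound : ∀ a ∈ core A, ∃ r : ℝ, f a = r ∧ ∀ᶠ x in 𝓝 a, f x ≤ ((r + 1 : ℝ) : EReal) := by
    intro a ha
    obtain ⟨r, hr⟩ : ∃ r : ℝ, f a = r :=
      ⟨_, (EReal.coe_toReal (core_subset A ha).ne (hf.2 a)).symm⟩
    exact ⟨r, hr, hconv.eventually_le_of_mem_core h hf.2 hlsc ha hr⟩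
  have hcore : core A ⊆ interior A := fun a ha => by
    obtain ⟨r, -, hle⟩ := hbound a ha
    exact mem_interior_iff_mem_nhds.2 (hle.mono fun x hx => hx.trans_lt (EReal.coe_lt_top _))
  have heq : interior A = core A := (interior_subset_core A).antisymm hcore
  refine ⟨fun a ha => ?_, heq⟩
  obtain ⟨r, hr, hle⟩ := hbound a (heq ▸ ha)
  exact (hconv.continuousAt_of_eventually_le hf.2 hr hle).continuousWithinAt
end
end

section
/- Let X be a topological vector space such that every proper convex weakly lower semicontinuous function on X that is finite everywhere is continuous at 0. Then X has the Banach–Steinhaus property: every pointwise-bounded subset B of X* is equicontinuous. -/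
open Topology Set

noncomputable section

variable {X : Type*} [AddCommGroup X] [Module ℝ X] [TopologicalSpace X]

/-! For nonempty pointwise-bounded `B`, the support function `x ↦ sup_{g ∈ B} |g x|` of `B ∪ -B` is
finite, convex and weakly lower semicontinuous (a supremum of weakly continuous convex functions)
and vanishes at `0`. By hypothesis it is continuous at `0`, so it is `< 1` on a neighborhood of `0`,
which is the polar bound defining equicontinuity. -/

theorem convexFnE_iSup {E ι : Type*} [AddCommGroup E] [Module ℝ E] {φ : ι → E → ℝ}
    (hφ : ∀ i, ConvexOn ℝ univ (φ i)) : ConvexFnE fun x => ⨆ i, (φ i x : EReal) := by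
  intro x y a b ha hb hab
  refine iSup_le fun i => ?_
  calc (φ i (a • x + b • y) : EReal)
      ≤ ((a * φ i x + b * φ i y : ℝ) : EReal) :=
        EReal.coe_le_coe_iff.2 ((hφ i).2 (mem_univ x) (mem_univ y) ha hb hab)
    _ = (a : EReal) * (φ i x : EReal) + (b : EReal) * (φ i y : EReal) := by
        rw [EReal.coe_add, EReal.coe_mul, EReal.coe_mul]
    _ ≤ (a : EReal) * (⨆ j, (φ j x : EReal)) + (b : EReal) * ⨆ j, (φ j y : EReal) := by
        gcongr <;> exact le_iSup (fun j => (φ j _ : EReal)) i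

theorem continuous_weakTop_apply (g : X →L[ℝ] ℝ) : Continuous[weakTop X, _] g :=
  @Continuous.comp X ((X →L[ℝ] ℝ) → ℝ) ℝ (weakTop X) _ _ (fun x f => f x) (fun p => p g)
    (continuous_apply g) continuous_induced_dom

def supAbs (B : Set (X →L[ℝ] ℝ)) (x : X) : EReal := ⨆ g : B, ((|g.1 x| : ℝ) : EReal)

section supAbs

variable {B : Set (X →L[ℝ] ℝ)}

theorem abs_apply_le_supAbs {g : X →L[ℝ] ℝ} (hg : g ∈ B) (x : X) :
    ((|g x| : ℝ) : EReal) ≤ supAbs B x :=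
  le_iSup (fun g : B => ((|g.1 x| : ℝ) : EReal)) ⟨g, hg⟩

theorem supAbs_lt_top (hB : PtwBounded B) (x : X) : supAbs B x < ⊤ := by
  obtain ⟨M, hM⟩ := hB x
  calc supAbs B x ≤ (M : EReal) := iSup_le fun g => EReal.coe_le_coe_iff.2 (hM g.1 g.2)
    _ < ⊤ := EReal.coe_lt_top M

theorem supAbs_ne_bot (hB : B.Nonempty) (x : X) : supAbs B x ≠ ⊥ :=
  let ⟨_, hg⟩ := hB
  ne_bot_of_le_ne_bot (EReal.coe_ne_bot _) (abs_apply_le_supAbs hg x)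

theorem supAbs_zero (hB : B.Nonempty) : supAbs B (0 : X) = 0 := by
  obtain ⟨g, hg⟩ := hB
  refine le_antisymm (iSup_le fun _ => by simp) ?_
  simpa using abs_apply_le_supAbs hg (0 : X)

theorem convexFnE_supAbs : ConvexFnE (supAbs B) :=
  convexFnE_iSup fun g : B => convexOn_univ_norm.comp_linearMap (g.1 : X →ₗ[ℝ] ℝ)

theorem weakLSC_supAbs : WeakLSC (supAbs B) :=
  @lowerSemicontinuous_iSup X (weakTop X) _ _ _ _ fun g : B =>
    @Continuous.lowerSemicontinuous X (weakTop X) _ _ _ _ _ <|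
      @Continuous.comp X ℝ EReal (weakTop X) _ _ g.1 (fun t => ((|t| : ℝ) : EReal))
        (continuous_coe_real_ereal.comp continuous_abs) (continuous_weakTop_apply g.1)

theorem equicont_of_continuousAt_supAbs (hB : B.Nonempty) (hc : ContinuousAt (supAbs B) 0) :
    Equicont B := by
  have hV : supAbs B ⁻¹' Iio (1 : EReal) ∈ 𝓝 (0 : X) :=
    hc (Iio_mem_nhds ((supAbs_zero hB).trans_lt zero_lt_one))
  exact ⟨_, hV, fun g hg x hx =>
    (EReal.coe_lt_coe_iff.1 ((abs_apply_le_supAbs hg x).trans_lt hx)).le⟩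

end supAbs

theorem stmt2_general
    (h : ∀ f : X → EReal, ProperE f → ConvexFnE f → WeakLSC f → (∀ x, f x < ⊤) →
      ContinuousAt f 0) :
    BSProp X := by
  intro B hB
  rcases B.eq_empty_or_nonempty with rfl | hne
  · exact ⟨univ, Filter.univ_mem, by simp⟩
  have hfin := supAbs_lt_top hB
  exact equicont_of_continuousAt_supAbs hne <|
    h _ ⟨⟨0, hfin 0⟩, supAbs_ne_bot hne⟩ convexFnE_supAbs weakLSC_supAbs hfin

theorem stmt2 [IsTopologicalAddGroup X] [ContinuousSMul ℝ X]
    (h : ∀ f : X → EReal, ProperE f → ConvexFnE f → WeakLSC f → (∀ x, f x < ⊤) →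
      ContinuousAt f 0) :
    BSProp X :=
  stmt2_general h
end
end

section
/- Let X be a topological vector space such that every multifunction T : X ⇉ X* is locally bounded on the topological interior of Pr_X(dom φ_T). Then X has the Banach–Steinhaus property. -/
open Topology Set

noncomputable section

variable {X : Type*} [AddCommGroup X] [Module ℝ X] [TopologicalSpace X]

theorem Equicont.mono {B C : Set (X →L[ℝ] ℝ)} (hC : Equicont C) (hBC : B ⊆ C) : Equicont B :=
  let ⟨V, hV, hCV⟩ := hC
  ⟨V, hV, fun f hf => hCV f (hBC hf)⟩

theorem sigmaE_lt_top {B : Set (X →L[ℝ] ℝ)} (hB : PtwBounded B) (x : X) : sigmaE B x < ⊤ := by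
  obtain ⟨M, hM⟩ := hB x
  refine lt_of_le_of_lt (iSup_le fun f => ?_) (EReal.coe_lt_top M)
  exact EReal.coe_le_coe_iff.mpr (abs_le.mp (hM f.1 f.2)).2

theorem fitz_zero_prod (B : Set (X →L[ℝ] ℝ)) (z : X × (X →L[ℝ] ℝ)) :
    fitz ({(0 : X)} ×ˢ B) z = sigmaE B z.1 := by
  apply le_antisymm
  · refine iSup_le fun p => ?_
    obtain ⟨hx, hf⟩ := p.2
    rw [mem_singleton_iff.mp hx]
    exact le_iSup_of_le ⟨p.1.2, hf⟩ (by simp)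
  · exact iSup_le fun f => le_iSup_of_le ⟨(0, f.1), rfl, f.2⟩ (by simp)

theorem fitzDom_zero_prod {B : Set (X →L[ℝ] ℝ)} (hB : PtwBounded B) :
    fitzDom ({(0 : X)} ×ˢ B) = univ :=
  eq_univ_of_forall fun z => by
    change fitz _ z < ⊤
    exact fitz_zero_prod B z ▸ sigmaE_lt_top hB z.1

theorem Equicont.of_locBddAt_zero_prod {B : Set (X →L[ℝ] ℝ)}
    (h : LocBddAt ({(0 : X)} ×ˢ B) 0) : Equicont B := by
  obtain ⟨U, hU, hEq⟩ := h
  exact hEq.mono fun f hf => ⟨(0, f), ⟨rfl, hf⟩, mem_of_mem_nhds hU, rfl⟩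

theorem stmt10_general
    (h : ∀ T : Set (X × (X →L[ℝ] ℝ)), ∀ x₀ ∈ interior (Prod.fst '' fitzDom T),
      LocBddAt T x₀) :
    BSProp X := by
  intro B hB
  apply Equicont.of_locBddAt_zero_prod
  apply h
  rw [fitzDom_zero_prod hB, image_univ_of_surjective Prod.fst_surjective, interior_univ]
  trivial

theorem stmt10 [IsTopologicalAddGroup X] [ContinuousSMul ℝ X]
    (h : ∀ T : Set (X × (X →L[ℝ] ℝ)), ∀ x₀ ∈ interior (Prod.fst '' fitzDom T),
      LocBddAt T x₀) :
    BSProp X :=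
  stmt10_general h
end
end

section
/- Let X be a topological vector space and B ⊆ X* pointwise-bounded. Then the subdifferential ∂σ_B of the support function σ_B satisfies φ_{∂σ_B}(x, x*) ≤ σ_B(x) + ι_B̄(x*) in the sense that φ_{∂σ_B}(x, x*) ≤ σ_B(x) for all x ∈ X and x* ∈ B; in particular X × B ⊆ dom φ_{∂σ_B} and Pr_X(dom φ_{∂σ_B}) = X. -/
open Topology Set

noncomputable section

variable {X : Type*} [AddCommGroup X] [Module ℝ X] [TopologicalSpace X]

-- Each term of the supremum: `g p ≤ f p` plus the subgradient inequality `q (x - p) ≤ f x - f p`.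
theorem fitz_le_of_subset_esubdiff {f : X → ℝ} {T : Set (X × (X →L[ℝ] ℝ))}
    (hT : ∀ p ∈ T, p.2 ∈ esubdiff 0 f p.1) {g : X →L[ℝ] ℝ} (hg : ∀ y, g y ≤ f y) (x : X) :
    fitz T (x, g) ≤ ((f x : ℝ) : EReal) := by
  refine iSup_le fun ⟨p, hp⟩ => EReal.coe_le_coe_iff.mpr ?_
  have hsub := hT p hp x
  have hgp := hg p.1
  rw [map_sub] at hsub
  dsimp only
  linarith

theorem mem_fitzDom_of_fitz_le {T : Set (X × (X →L[ℝ] ℝ))} {z : X × (X →L[ℝ] ℝ)} {r : ℝ}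
    (h : fitz T z ≤ (r : EReal)) : z ∈ fitzDom T :=
  h.trans_lt (EReal.coe_lt_top r)

namespace PtwBounded

variable {B : Set (X →L[ℝ] ℝ)}

theorem le_sigmaR (hB : PtwBounded B) {g : X →L[ℝ] ℝ} (hg : g ∈ B) (x : X) :
    g x ≤ sigmaR B x := by
  obtain ⟨M, hM⟩ := hB x
  have hbdd : BddAbove (range fun f : B => f.1 x) := by
    refine ⟨M, ?_⟩
    rintro _ ⟨f, rfl⟩
    exact (abs_le.mp (hM f.1 f.2)).2
  exact le_ciSup hbdd (⟨g, hg⟩ : B)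

-- For `B = ∅` the witness is `0`: then `sigmaR B = 0`, the junk value of an empty `⨆` in `ℝ`.
theorem exists_forall_le_sigmaR (hB : PtwBounded B) : ∃ g : X →L[ℝ] ℝ, ∀ y, g y ≤ sigmaR B y := by
  rcases B.eq_empty_or_nonempty with rfl | ⟨g, hg⟩
  · exact ⟨0, fun y => by simp [sigmaR]⟩
  · exact ⟨g, hB.le_sigmaR hg⟩

end PtwBounded

theorem stmt14_general (B : Set (X →L[ℝ] ℝ)) (hB : PtwBounded B)
    (S : Set (X × (X →L[ℝ] ℝ))) (hS : S = {p | p.2 ∈ esubdiff 0 (sigmaR B) p.1}) :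
    (∀ x : X, ∀ g ∈ B, fitz S (x, g) ≤ ((sigmaR B x : ℝ) : EReal)) ∧
      (∀ x : X, ∀ g ∈ B, (x, g) ∈ fitzDom S) ∧
      Prod.fst '' fitzDom S = Set.univ := by
  have hfitz : ∀ {g : X →L[ℝ] ℝ}, (∀ y, g y ≤ sigmaR B y) → ∀ x, fitz S (x, g) ≤ sigmaR B x :=
    fitz_le_of_subset_esubdiff fun p hp => by rwa [hS] at hp
  have hB_le (x : X) (g) (hg : g ∈ B) := hfitz (hB.le_sigmaR hg) x
  refine ⟨hB_le, fun x g hg => mem_fitzDom_of_fitz_le (hB_le x g hg), ?_⟩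
  obtain ⟨g, hg⟩ := hB.exists_forall_le_sigmaR
  exact eq_univ_of_forall fun x => ⟨(x, g), mem_fitzDom_of_fitz_le (hfitz hg x), rfl⟩

theorem stmt14 [IsTopologicalAddGroup X] [ContinuousSMul ℝ X] (B : Set (X →L[ℝ] ℝ)) (hB : PtwBounded B)
    (S : Set (X × (X →L[ℝ] ℝ))) (hS : S = {p | p.2 ∈ esubdiff 0 (sigmaR B) p.1}) :
    (∀ x : X, ∀ g ∈ B, fitz S (x, g) ≤ ((sigmaR B x : ℝ) : EReal)) ∧
      (∀ x : X, ∀ g ∈ B, (x, g) ∈ fitzDom S) ∧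
      Prod.fst '' fitzDom S = Set.univ :=
  stmt14_general B hB S hS
end
end
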